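/- A bounded operator C : L²(𝕋) → H_Z is of the form C = C_F for some F ∈ H_Z satisfying M̃(F) = F if and only if it satisfies the two intertwining relations: (a) C S₀ = Ũ C; and (b) C τ(f) = π_Z(f) C for all f ∈ L^∞(𝕋), where (τ(f)α)(z) = f(z)α(z) is multiplication on L²(𝕋). -/

import Mathlib

/-!
Relation (b) determines `C` from `F = C 1`: it gives `C α = α F` first for bounded periodic `α`
(as `α = τ(α) 1`) and then, cutting `α` down to `{‖α‖ ≤ n}` and letting `n → ∞`, for all `α`.
For `C = C_F`, relation (a) at `α = 1` reads `m₀ F = Ũ F`, i.e. `M̃ F = F`. Conversely, since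
`Ũ (α(z) H) = α(z²) Ũ H` for periodic `α`, the fixed-point equation gives
`C (S₀ α) = m₀ α(z²) F = α(z²) Ũ F = Ũ (C α)`.
-/

open MeasureTheory Complex Real Filter Topology

noncomputable section

/-- The normalized Haar measure `μ` of the circle `𝕋`, realized on the fundamental
domain `(0, 2π]` of `ℝ` via the identification `z = e^{-iω}`. -/
def muT : Measure ℝ := (ENNReal.ofReal (2 * π))⁻¹ • (volume.restrict (Set.Ioc 0 (2 * π)))

/-- The measure on `𝕋 × [0,1]` underlying the Hilbert space `H_Z` (Zak-transform side). -/
def muZ : Measure (ℝ × ℝ) := muT.prod (volume.restrict (Set.Ioc 0 1))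

/-- `L²(𝕋)`. -/
abbrev L2T : Type := MeasureTheory.Lp ℂ 2 muT

/-- The Hilbert space `H_Z ≃ L²(𝕋 × [0,1])`, the range of the Zak transform. -/
abbrev HZ : Type := MeasureTheory.Lp ℂ 2 muZ

/-- Quasi-periodicity characterizing membership of a function in `H_Z`:
`2π`-periodicity in the `ω`-coordinate and `H(z, x + n) = z^{-n} H(z, x)`,
i.e. `H(ω, x + n) = e^{inω} H(ω, x)`. -/
def QP (H : ℝ × ℝ → ℂ) : Prop :=
  (∀ ω x : ℝ, H (ω + 2 * π, x) = H (ω, x)) ∧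
    ∀ (ω x : ℝ) (n : ℤ),
      H (ω, x + (n : ℝ)) = Complex.exp (Complex.I * (n : ℂ) * (ω : ℂ)) * H (ω, x)

/-- `T = π_Z(m)`, multiplication by `m(z)` on `H_Z`. -/
def IsMulOp (m : ℝ → ℂ) (T : HZ →L[ℂ] HZ) : Prop :=
  ∀ H : HZ, ⇑(T H) =ᵐ[muZ] fun p : ℝ × ℝ => m p.1 * (⇑H) p

/-- `Ut` is the unitary `Ũ` on `H_Z`:
`(ŨH)(z,x) = 2^{-1/2} (H(z², x/2) + z·H(z², (x+1)/2))`, characterized on quasi-periodic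
representatives (`z = e^{-iω}`). -/
def IsUt (Ut : HZ ≃ₗᵢ[ℂ] HZ) : Prop :=
  ∀ H : ℝ × ℝ → ℂ, Measurable H → QP H →
    ∀ hH : MeasureTheory.MemLp H 2 muZ,
      ⇑(Ut (hH.toLp H)) =ᵐ[muZ] fun p : ℝ × ℝ =>
        ((Real.sqrt 2 : ℝ) : ℂ)⁻¹ *
          (H (2 * p.1, p.2 / 2) +
            Complex.exp (-(Complex.I * (p.1 : ℂ))) * H (2 * p.1, (p.2 + 1) / 2))

/-- `S` is the operator `(Sf)(z) = m(z) f(z²)` on `L²(𝕋)`, characterized on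
`2π`-periodic representatives. -/
def IsSOp (m : ℝ → ℂ) (S : L2T →L[ℂ] L2T) : Prop :=
  ∀ f : ℝ → ℂ, Measurable f → (∀ ω, f (ω + 2 * π) = f ω) →
    ∀ hf : MeasureTheory.MemLp f 2 muT,
      ⇑(S (hf.toLp f)) =ᵐ[muT] fun ω : ℝ => m ω * f (2 * ω)

open Function

theorem measurable_toIocDiv {T : ℝ} (hT : 0 < T) (a : ℝ) : Measurable (toIocDiv hT a) := by
  rw [show toIocDiv hT a = fun b => -⌊(a + T - b) / T⌋ from funext (toIocDiv_eq_neg_floor hT a)]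
  exact ((measurable_const.sub measurable_id).div_const T).floor.neg

theorem measurable_toIocMod {T : ℝ} (hT : 0 < T) (a : ℝ) : Measurable (toIocMod hT a) := by
  rw [show toIocMod hT a = fun b => b - toIocDiv hT a b • T from
    funext fun b => (self_sub_toIocDiv_zsmul hT a b).symm]
  simp_rw [zsmul_eq_mul]
  exact measurable_id.sub ((measurable_from_top.comp (measurable_toIocDiv hT a)).mul_const T)

section Periodize

variable {T : ℝ} {β : Type*}

theorem periodic_comp_toIocMod (hT : 0 < T) (f : ℝ → β) (a : ℝ) :
    Periodic (f ∘ toIocMod hT a) T := fun b => by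
  simp only [comp_apply, toIocMod_add_right]

theorem comp_toIocMod_ae_eq (hT : 0 < T) {μ : Measure ℝ} {a : ℝ}
    (hμ : ∀ᵐ ω ∂μ, ω ∈ Set.Ioc a (a + T)) (f : ℝ → β) : f ∘ toIocMod hT a =ᵐ[μ] f := by
  filter_upwards [hμ] with ω hω
  rw [comp_apply, (toIocMod_eq_self hT).2 hω]

theorem Lp.exists_measurable_periodic_ae_eq {E : Type*} [NormedAddCommGroup E]
    [MeasurableSpace E] [BorelSpace E] {p : ENNReal} {μ : Measure ℝ} {a : ℝ} (hT : 0 < T)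
    (hμ : ∀ᵐ ω ∂μ, ω ∈ Set.Ioc a (a + T)) (g : Lp E p μ) :
    ∃ α : ℝ → E, Measurable α ∧ Periodic α T ∧ ⇑g =ᵐ[μ] α := by
  have hg := Lp.aestronglyMeasurable g
  exact ⟨hg.mk g ∘ toIocMod hT a, hg.measurable_mk.comp (measurable_toIocMod hT a),
    periodic_comp_toIocMod hT _ a, hg.ae_eq_mk.trans (comp_toIocMod_ae_eq hT hμ _).symm⟩

end Periodize

instance : IsFiniteMeasure muT := by
  constructor
  rw [muT, Measure.smul_apply, Measure.restrict_apply MeasurableSet.univ]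
  simp only [Set.univ_inter, Real.volume_Ioc, smul_eq_mul]
  exact ENNReal.mul_lt_top (ENNReal.inv_lt_top.mpr (by positivity)) ENNReal.ofReal_lt_top

theorem ae_mem_Ioc_muT : ∀ᵐ ω ∂muT, ω ∈ Set.Ioc 0 (0 + 2 * π) := by
  rw [muT, zero_add]
  exact Measure.ae_smul_measure (ae_restrict_mem measurableSet_Ioc) _

theorem quasiMeasurePreserving_fst_muZ : Measure.QuasiMeasurePreserving Prod.fst muZ muT :=
  Measure.quasiMeasurePreserving_fst

theorem quasiMeasurePreserving_snd_muZ :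
    Measure.QuasiMeasurePreserving Prod.snd muZ (volume.restrict (Set.Ioc 0 1)) :=
  Measure.quasiMeasurePreserving_snd

theorem ae_eq_comp_fst_muZ {f g : ℝ → ℂ} (h : f =ᵐ[muT] g) :
    (fun p : ℝ × ℝ => f p.1) =ᵐ[muZ] fun p => g p.1 :=
  quasiMeasurePreserving_fst_muZ.ae_eq_comp h

theorem ae_mem_fundamentalDomain_muZ :
    ∀ᵐ p ∂muZ, p.1 ∈ Set.Ioc 0 (0 + 2 * π) ∧ p.2 ∈ Set.Ioc 0 (0 + 1) :=
  (quasiMeasurePreserving_fst_muZ.ae ae_mem_Ioc_muT).and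
    (quasiMeasurePreserving_snd_muZ.ae (by
      simpa using ae_restrict_mem (μ := volume) (measurableSet_Ioc (a := (0 : ℝ)) (b := 1))))

theorem forall_toLp_ae_eq_mul_iff {X Y E : Type*} [MeasurableSpace X] [MeasurableSpace Y]
    [NormedRing E] [MeasurableSpace E] [BorelSpace E] {p : ENNReal} {μ : Measure X}
    {ν : Measure Y} {φ : Y → X} (hφ : Measure.QuasiMeasurePreserving φ ν μ)
    (C : Lp E p μ → Y → E) (F : Y → E) :
    (∀ α : X → E, Measurable α → ∀ hα : MemLp α p μ,
      C (hα.toLp α) =ᵐ[ν] fun y => α (φ y) * F y) ↔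
      ∀ g : Lp E p μ, C g =ᵐ[ν] fun y => g (φ y) * F y := by
  constructor
  · intro h g
    have hg := Lp.aestronglyMeasurable g
    have hmem : MemLp (hg.mk g) p μ := (Lp.memLp g).ae_eq hg.ae_eq_mk
    have h' := h _ hg.measurable_mk hmem
    rw [show hmem.toLp _ = g from Lp.ext (hmem.coeFn_toLp.trans hg.ae_eq_mk.symm)] at h'
    filter_upwards [h', hφ.ae_eq_comp hg.ae_eq_mk] with y h₁ h₂
    rw [h₁, comp_apply.symm.trans (h₂.trans comp_apply)]
  · intro h α _ hα
    filter_upwards [h (hα.toLp α), hφ.ae_eq_comp hα.coeFn_toLp] with y h₁ h₂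
    rw [h₁, comp_apply.symm.trans (h₂.trans comp_apply)]

/-- The extension of `G` from the fundamental domain `(0, 2π] × (0, 1]` forced by `QP`. -/
def qpExtension (G : ℝ × ℝ → ℂ) : ℝ × ℝ → ℂ := fun p =>
  Complex.exp (Complex.I * (toIocDiv (zero_lt_one' ℝ) 0 p.2 : ℂ) * p.1) *
    G (toIocMod two_pi_pos 0 p.1, toIocMod (zero_lt_one' ℝ) 0 p.2)

theorem measurable_qpExtension {G : ℝ × ℝ → ℂ} (hG : Measurable G) :
    Measurable (qpExtension G) := by
  refine Measurable.mul ?_ (hG.comp ?_)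
  · exact Complex.measurable_exp.comp ((measurable_const.mul (measurable_from_top.comp
      ((measurable_toIocDiv _ 0).comp measurable_snd))).mul
      (Complex.measurable_ofReal.comp measurable_fst))
  · exact ((measurable_toIocMod _ 0).comp measurable_fst).prodMk
      ((measurable_toIocMod _ 0).comp measurable_snd)

theorem qp_qpExtension (G : ℝ × ℝ → ℂ) : QP (qpExtension G) := by
  constructor
  · intro ω x
    have hexp : Complex.I * (toIocDiv (zero_lt_one' ℝ) 0 x : ℂ) * ((ω + 2 * π : ℝ) : ℂ) =
        Complex.I * (toIocDiv (zero_lt_one' ℝ) 0 x : ℂ) * ω +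
          (toIocDiv (zero_lt_one' ℝ) 0 x : ℂ) * (2 * π * Complex.I) := by
      push_cast; ring
    simp only [qpExtension, toIocMod_add_right, hexp, Complex.exp_add,
      Complex.exp_int_mul_two_pi_mul_I, mul_one]
  · intro ω x n
    have hx : x + (n : ℝ) = x + n • (1 : ℝ) := by simp
    simp only [qpExtension, hx, toIocDiv_add_zsmul, toIocMod_add_zsmul, Int.cast_add,
      mul_add, add_mul, Complex.exp_add]
    ring

theorem qpExtension_ae_eq (G : ℝ × ℝ → ℂ) : qpExtension G =ᵐ[muZ] G := by
  filter_upwards [ae_mem_fundamentalDomain_muZ] with p ⟨h₁, h₂⟩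
  have hdiv : toIocDiv (zero_lt_one' ℝ) 0 p.2 = 0 := by
    rw [toIocDiv_eq_iff]; simpa using h₂
  simp [qpExtension, hdiv, (toIocMod_eq_self _).2 h₁, (toIocMod_eq_self _).2 h₂]

theorem HZ.exists_qp_ae_eq (g : HZ) : ∃ F : ℝ × ℝ → ℂ, Measurable F ∧ QP F ∧ ⇑g =ᵐ[muZ] F := by
  have hg := Lp.aestronglyMeasurable g
  exact ⟨qpExtension (hg.mk g), measurable_qpExtension hg.measurable_mk, qp_qpExtension _,
    hg.ae_eq_mk.trans (qpExtension_ae_eq _).symm⟩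

theorem L2T.exists_periodic_ae_eq (g : L2T) :
    ∃ α : ℝ → ℂ, Measurable α ∧ Periodic α (2 * π) ∧ ⇑g =ᵐ[muT] α :=
  Lp.exists_measurable_periodic_ae_eq two_pi_pos ae_mem_Ioc_muT g

theorem QP.periodic_mul {F : ℝ × ℝ → ℂ} (hF : QP F) {α : ℝ → ℂ} (hα : Periodic α (2 * π)) :
    QP fun p => α p.1 * F p := by
  refine ⟨fun ω x => by simp only [hα ω, hF.1 ω x], fun ω x n => ?_⟩
  simp only [hF.2 ω x n]
  ring

theorem IsMulOp.unique {m : ℝ → ℂ} {T₁ T₂ : HZ →L[ℂ] HZ} (h₁ : IsMulOp m T₁)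
    (h₂ : IsMulOp m T₂) : T₁ = T₂ :=
  ContinuousLinearMap.ext fun H => Lp.ext ((h₁ H).trans (h₂ H).symm)

theorem IsSOp.apply_ae_eq {m : ℝ → ℂ} {S : L2T →L[ℂ] L2T} (hS : IsSOp m S) {α : ℝ → ℂ}
    (hαm : Measurable α) (hα : Periodic α (2 * π)) {g : L2T} (hg : ⇑g =ᵐ[muT] α) :
    ⇑(S g) =ᵐ[muT] fun ω => m ω * α (2 * ω) := by
  have hαmem : MemLp α 2 muT := (Lp.memLp g).ae_eq hg
  rw [← show hαmem.toLp α = g from Lp.ext (hαmem.coeFn_toLp.trans hg.symm)]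
  exact hS α hαm hα hαmem

theorem IsUt.apply_ae_eq {Ut : HZ ≃ₗᵢ[ℂ] HZ} (hUt : IsUt Ut) {F : ℝ × ℝ → ℂ}
    (hFm : Measurable F) (hF : QP F) {H : HZ} (hH : ⇑H =ᵐ[muZ] F) :
    ⇑(Ut H) =ᵐ[muZ] fun p => ((Real.sqrt 2 : ℝ) : ℂ)⁻¹ *
      (F (2 * p.1, p.2 / 2) + Complex.exp (-(Complex.I * p.1)) * F (2 * p.1, (p.2 + 1) / 2)) := by
  have hFmem : MemLp F 2 muZ := (Lp.memLp H).ae_eq hH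
  rw [← show hFmem.toLp F = H from Lp.ext (hFmem.coeFn_toLp.trans hH.symm)]
  exact hUt F hFm hF hFmem

theorem IsUt.apply_periodic_mul {Ut : HZ ≃ₗᵢ[ℂ] HZ} (hUt : IsUt Ut) {F : ℝ × ℝ → ℂ}
    (hFm : Measurable F) (hF : QP F) {α : ℝ → ℂ} (hαm : Measurable α)
    (hα : Periodic α (2 * π)) {G H : HZ} (hG : ⇑G =ᵐ[muZ] F)
    (hH : ⇑H =ᵐ[muZ] fun p => α p.1 * F p) :
    ⇑(Ut H) =ᵐ[muZ] fun p => α (2 * p.1) * Ut G p := by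
  have hαFm : Measurable fun p : ℝ × ℝ => α p.1 * F p := (hαm.comp measurable_fst).mul hFm
  filter_upwards [hUt.apply_ae_eq hαFm (hF.periodic_mul hα) hH, hUt.apply_ae_eq hFm hF hG]
    with p hH' hG'
  rw [hH', hG']
  ring

def IsL2TMulOp (f : ℝ → ℂ) (T : L2T →L[ℂ] L2T) : Prop :=
  ∀ α : L2T, ⇑(T α) =ᵐ[muT] fun ω => f ω * α ω

section Intertwiners

variable {C : L2T →L[ℂ] HZ} {F : ℝ × ℝ → ℂ}

theorem map_mulOp_of_forall_ae_eq_mul (hC : ∀ g : L2T, ⇑(C g) =ᵐ[muZ] fun p => g p.1 * F p)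
    {f : ℝ → ℂ} {τ : L2T →L[ℂ] L2T} {σ : HZ →L[ℂ] HZ} (hτ : IsL2TMulOp f τ)
    (hσ : IsMulOp f σ) (g : L2T) : C (τ g) = σ (C g) := by
  refine Lp.ext ?_
  filter_upwards [hC (τ g), ae_eq_comp_fst_muZ (hτ g), hσ (C g), hC g] with p h₁ h₂ h₃ h₄
  rw [h₁, h₂, h₃, h₄, mul_assoc]

theorem map_SOp_of_forall_ae_eq_mul (hC : ∀ g : L2T, ⇑(C g) =ᵐ[muZ] fun p => g p.1 * F p)
    {m : ℝ → ℂ} {Ut : HZ ≃ₗᵢ[ℂ] HZ} {Tm : HZ →L[ℂ] HZ} {S : L2T →L[ℂ] L2T} (hUt : IsUt Ut)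
    (hTm : IsMulOp m Tm) (hS : IsSOp m S) (hFm : Measurable F) (hF : QP F) {G : HZ}
    (hG : ⇑G =ᵐ[muZ] F) (hfix : Tm G = Ut G) (g : L2T) : C (S g) = Ut (C g) := by
  obtain ⟨α, hαm, hα, hgα⟩ := L2T.exists_periodic_ae_eq g
  have hCg : ⇑(C g) =ᵐ[muZ] fun p => α p.1 * F p := by
    filter_upwards [hC g, ae_eq_comp_fst_muZ hgα] with p h₁ h₂
    rw [h₁, h₂]
  refine Lp.ext ?_
  filter_upwards [hC (S g), ae_eq_comp_fst_muZ (hS.apply_ae_eq hαm hα hgα),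
    hUt.apply_periodic_mul hFm hF hαm hα hG hCg, hTm G, hG] with p h₁ h₂ h₃ h₄ h₅
  rw [h₁, h₂, h₃, ← hfix, h₄, h₅]
  ring

theorem mulOp_eq_of_intertwines {m : ℝ → ℂ} {Ut : HZ ≃ₗᵢ[ℂ] HZ} {Tm : HZ →L[ℂ] HZ}
    {S τ : L2T →L[ℂ] L2T} {σ : HZ →L[ℂ] HZ} (hTm : IsMulOp m Tm) (hS : IsSOp m S)
    (hτ : IsL2TMulOp m τ) (hσ : IsMulOp m σ) (hCτ : ∀ α, C (τ α) = σ (C α))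
    (hCS : C (S (Lp.const 2 muT 1)) = Ut (C (Lp.const 2 muT 1))) :
    Tm (C (Lp.const 2 muT 1)) = Ut (C (Lp.const 2 muT 1)) := by
  have hSτ : S (Lp.const 2 muT 1) = τ (Lp.const 2 muT 1) := by
    refine Lp.ext ?_
    filter_upwards [hS.apply_ae_eq measurable_const (fun _ => rfl) (Lp.coeFn_const 2 muT 1),
      hτ (Lp.const 2 muT 1), Lp.coeFn_const 2 muT (1 : ℂ)] with ω h₁ h₂ h₃
    rw [h₁, h₂, h₃]
    rfl
  rw [← hCS, hSτ, hCτ, hTm.unique hσ]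

theorem ae_eq_of_forall_ae_eq_of_le {X β : Type*} [MeasurableSpace X] {μ : Measure X}
    {a : X → ℝ} {u v : X → β} (h : ∀ n : ℕ, ∀ᵐ x ∂μ, a x ≤ n → u x = v x) : u =ᵐ[μ] v := by
  filter_upwards [ae_all_iff.2 h] with x hx using hx _ (Nat.le_ceil _)

theorem forall_ae_eq_mul_of_intertwines {τ : (ℝ → ℂ) → L2T →L[ℂ] L2T}
    {σ : (ℝ → ℂ) → HZ →L[ℂ] HZ}
    (hτ : ∀ f, Measurable f → (∃ c, ∀ ω, ‖f ω‖ ≤ c) → IsL2TMulOp f (τ f))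
    (hσ : ∀ f, Measurable f → (∃ c, ∀ ω, ‖f ω‖ ≤ c) → IsMulOp f (σ f))
    (hCτ : ∀ f, Measurable f → (∃ c, ∀ ω, ‖f ω‖ ≤ c) → Periodic f (2 * π) →
      ∀ α, C (τ f α) = σ f (C α))
    (hF : ⇑(C (Lp.const 2 muT 1)) =ᵐ[muZ] F) (g : L2T) :
    ⇑(C g) =ᵐ[muZ] fun p => g p.1 * F p := by
  obtain ⟨α, hαm, hα, hgα⟩ := L2T.exists_periodic_ae_eq g
  refine ae_eq_of_forall_ae_eq_of_le (a := fun p => ‖α p.1‖) fun n => ?_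
  -- `χ` cuts `α` down to `‖α‖ ≤ n`, so that `χ` and `χ α` are bounded and (b) applies to them
  set χ : ℝ → ℂ := (fun z : ℂ => if ‖z‖ ≤ n then 1 else 0) ∘ α
  have hχm : Measurable χ :=
    (Measurable.ite (measurableSet_le measurable_norm measurable_const) measurable_const
      measurable_const).comp hαm
  set β : ℝ → ℂ := fun ω => χ ω * α ω
  have hβm : Measurable β := hχm.mul hαm
  have hχ : ∃ c, ∀ ω, ‖χ ω‖ ≤ c := ⟨1, fun ω => by by_cases h : ‖α ω‖ ≤ n <;> simp [χ, h]⟩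
  have hβ : ∃ c, ∀ ω, ‖β ω‖ ≤ c := ⟨n, fun ω => by by_cases h : ‖α ω‖ ≤ n <;> simp [β, χ, h]⟩
  have hχper : Periodic χ (2 * π) := hα.comp _
  have hβper : Periodic β (2 * π) := hχper.mul hα
  have hτ_eq : τ χ g = τ β (Lp.const 2 muT 1) := by
    refine Lp.ext ?_
    filter_upwards [hτ χ hχm hχ g, hτ β hβm hβ (Lp.const 2 muT 1), hgα,
      Lp.coeFn_const 2 muT (1 : ℂ)] with ω h₁ h₂ h₃ h₄
    rw [h₁, h₂, h₃, h₄, const_apply, mul_one]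
  have hσ_eq : σ χ (C g) = σ β (C (Lp.const 2 muT 1)) := by
    rw [← hCτ χ hχm hχ hχper, ← hCτ β hβm hβ hβper, hτ_eq]
  filter_upwards [hσ χ hχm hχ (C g), hσ β hβm hβ (C (Lp.const 2 muT 1)), hF,
    ae_eq_comp_fst_muZ hgα] with p h₁ h₂ h₃ h₄ hle
  have key := h₁.symm.trans ((congrFun (congrArg (⇑) hσ_eq) p).trans h₂)
  simp only [β, χ, comp_apply, hle, if_true, one_mul, h₃] at key
  rw [key, h₄]

end Intertwiners

theorem intertwiner_iff_of_scaling_form_general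
    (m₀ : ℝ → ℂ)
    (hm_meas : Measurable m₀) (hm_bdd : ∃ C, ∀ ω, ‖m₀ ω‖ ≤ C)
    (hm_per : ∀ ω, m₀ (ω + 2 * π) = m₀ ω)
    (Ut : HZ ≃ₗᵢ[ℂ] HZ) (hUt : IsUt Ut)
    (Tm : HZ →L[ℂ] HZ) (hTm : IsMulOp m₀ Tm)
    (S₀ : L2T →L[ℂ] L2T) (hS₀ : IsSOp m₀ S₀)
    (PiZ : (ℝ → ℂ) → HZ →L[ℂ] HZ)
    (hPiZ : ∀ f : ℝ → ℂ, Measurable f → (∃ c, ∀ ω, ‖f ω‖ ≤ c) →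
      ∀ H : HZ, ⇑(PiZ f H) =ᵐ[muZ] fun p : ℝ × ℝ => f p.1 * (⇑H) p)
    (Tau : (ℝ → ℂ) → L2T →L[ℂ] L2T)
    (hTau : ∀ f : ℝ → ℂ, Measurable f → (∃ c, ∀ ω, ‖f ω‖ ≤ c) →
      ∀ α : L2T, ⇑(Tau f α) =ᵐ[muT] fun ω : ℝ => f ω * (⇑α) ω)
    (C : L2T →L[ℂ] HZ) :
    (∃ (F : ℝ × ℝ → ℂ) (hF_mem : MeasureTheory.MemLp F 2 muZ),
      Measurable F ∧ QP F ∧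
        Ut.symm (Tm (hF_mem.toLp F)) = hF_mem.toLp F ∧
        ∀ (α : ℝ → ℂ), Measurable α → ∀ hα : MeasureTheory.MemLp α 2 muT,
          ⇑(C (hα.toLp α)) =ᵐ[muZ] fun p : ℝ × ℝ => α p.1 * F p) ↔
      ((∀ α : L2T, C (S₀ α) = Ut (C α)) ∧
        ∀ f : ℝ → ℂ, Measurable f → (∃ c, ∀ ω, ‖f ω‖ ≤ c) →
          (∀ ω, f (ω + 2 * π) = f ω) →
            ∀ α : L2T, C (Tau f α) = PiZ f (C α)) := by
  simp_rw [forall_toLp_ae_eq_mul_iff quasiMeasurePreserving_fst_muZ (fun g => ⇑(C g)),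
    LinearIsometryEquiv.symm_apply_eq]
  constructor
  · rintro ⟨F, hF_mem, hFm, hF, hfix, hC⟩
    exact ⟨map_SOp_of_forall_ae_eq_mul hC hUt hTm hS₀ hFm hF hF_mem.coeFn_toLp hfix,
      fun f hfm hfb _ => map_mulOp_of_forall_ae_eq_mul hC (hTau f hfm hfb) (hPiZ f hfm hfb)⟩
  · rintro ⟨hCS, hCτ⟩
    obtain ⟨F, hFm, hF, hCF⟩ := HZ.exists_qp_ae_eq (C (Lp.const 2 muT 1))
    have hF_mem : MemLp F 2 muZ := (Lp.memLp _).ae_eq hCF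
    refine ⟨F, hF_mem, hFm, hF, ?_, forall_ae_eq_mul_of_intertwines hTau hPiZ hCτ hCF⟩
    rw [show hF_mem.toLp F = C (Lp.const 2 muT 1) from Lp.ext (hF_mem.coeFn_toLp.trans hCF.symm)]
    exact mulOp_eq_of_intertwines hTm hS₀ (hTau m₀ hm_meas hm_bdd) (hPiZ m₀ hm_meas hm_bdd)
      (hCτ m₀ hm_meas hm_bdd hm_per) (hCS _)

/-- Corollary 4.8: a bounded operator `C : L²(𝕋) → H_Z` is of the form
`C = C_F` for some `F ∈ H_Z` with `M̃(F) = F` if and only if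
(a) `C S₀ = Ũ C`, and (b) `C τ(f) = π_Z(f) C` for all `f ∈ L^∞(𝕋)`, where `τ(f)` is
multiplication by `f` on `L²(𝕋)`. -/
theorem intertwiner_iff_of_scaling_form
    (m₀ : ℝ → ℂ)
    (hm_meas : Measurable m₀) (hm_bdd : ∃ C, ∀ ω, ‖m₀ ω‖ ≤ C)
    (hm_per : ∀ ω, m₀ (ω + 2 * π) = m₀ ω)
    (hm_quad : ∀ᵐ ω ∂(volume : Measure ℝ), ‖m₀ ω‖ ^ 2 + ‖m₀ (ω + π)‖ ^ 2 = 2)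
    (Ut : HZ ≃ₗᵢ[ℂ] HZ) (hUt : IsUt Ut)
    (Tm : HZ →L[ℂ] HZ) (hTm : IsMulOp m₀ Tm)
    (S₀ : L2T →L[ℂ] L2T) (hS₀ : IsSOp m₀ S₀)
    (PiZ : (ℝ → ℂ) → HZ →L[ℂ] HZ)
    (hPiZ : ∀ f : ℝ → ℂ, Measurable f → (∃ c, ∀ ω, ‖f ω‖ ≤ c) →
      ∀ H : HZ, ⇑(PiZ f H) =ᵐ[muZ] fun p : ℝ × ℝ => f p.1 * (⇑H) p)
    (Tau : (ℝ → ℂ) → L2T →L[ℂ] L2T)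
    (hTau : ∀ f : ℝ → ℂ, Measurable f → (∃ c, ∀ ω, ‖f ω‖ ≤ c) →
      ∀ α : L2T, ⇑(Tau f α) =ᵐ[muT] fun ω : ℝ => f ω * (⇑α) ω)
    (C : L2T →L[ℂ] HZ) :
    (∃ (F : ℝ × ℝ → ℂ) (hF_mem : MeasureTheory.MemLp F 2 muZ),
      Measurable F ∧ QP F ∧
        Ut.symm (Tm (hF_mem.toLp F)) = hF_mem.toLp F ∧
        ∀ (α : ℝ → ℂ), Measurable α → ∀ hα : MeasureTheory.MemLp α 2 muT,
          ⇑(C (hα.toLp α)) =ᵐ[muZ] fun p : ℝ × ℝ => α p.1 * F p) ↔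
      ((∀ α : L2T, C (S₀ α) = Ut (C α)) ∧
        ∀ f : ℝ → ℂ, Measurable f → (∃ c, ∀ ω, ‖f ω‖ ≤ c) →
          (∀ ω, f (ω + 2 * π) = f ω) →
            ∀ α : L2T, C (Tau f α) = PiZ f (C α)) :=
  intertwiner_iff_of_scaling_form_general m₀ hm_meas hm_bdd hm_per Ut hUt Tm hTm S₀ hS₀ PiZ hPiZ Tau
    hTau C

end
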